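/- Let q be a prime power, fix r, j, m ∈ ℕ with 2 ≤ j ≤ m, let H be a j-uniform hypergraph on {1,…,m}, and let f ∈ 𝔽_q[x] be a monic irreducible polynomial. Let K_f ⊆ (𝔽_q[x])^m be the set of m-tuples (g_1,…,g_m) that fail to be H-wise relatively r-prime at f, i.e., such that there exists a hyperedge e of H with f^r dividing gcd{g_i : i ∈ e}. Then the density of K_f exists, equals 1 − ∑_{k=0}^m i_k(H) (1 − 1/q^{r·deg f})^{m−k} (1/q^{r·deg f})^k, and satisfies 𝔻(K_f) ≤ ((m−1)/q^{r·deg f})^2. -/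

import Mathlib

open scoped BigOperators

/-- The number of independent vertex sets of cardinality `k` of the hypergraph `H`. -/
noncomputable def indepCount {m : ℕ} (H : Finset (Finset (Fin m))) (k : ℕ) : ℕ :=
  Nat.card {s : Finset (Fin m) // (∀ e ∈ H, ¬ e ⊆ s) ∧ s.card = k}

/-- The `l`-th polynomial `f_l` in the enumeration of `𝔽_q[x]` determined by the
enumeration `a` of `𝔽_q` (with `a 0 = 0`). -/
noncomputable def fenum {Fq : Type*} [Field Fq] [Fintype Fq]
    (a : Fin (Fintype.card Fq) → Fq) (l : ℕ) : Polynomial Fq :=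
  ∑ i ∈ Finset.range (l + 1),
    Polynomial.C (a ⟨l / (Fintype.card Fq) ^ i % Fintype.card Fq,
      Nat.mod_lt _ Fintype.card_pos⟩) * Polynomial.X ^ i

/-!
Write `e = deg F` for `F = f^r`. On the block of indices `[u q^e, (u+1) q^e)` the enumeration
reads `f_l = X^e f_u + p` with `p` running over all polynomials of degree `< e`, so each block
contains exactly one multiple of `F`; hence the proportion of multiples of `F` among
`f_0, …, f_N` tends to `t = q^{-e}`. A tuple in `{f_0, …, f_N}^m` lies outside `K_f` iff the set
of its coordinates divisible by `F` is independent in `H`, and the tuples with a prescribed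
such set `s` are counted by a product, so the proportion of `K_f` is the polynomial
`1 - ∑_k i_k(H) (1 - p)^{m-k} p^k` evaluated at that proportion `p`; continuity gives the limit.
Since every edge has at least two vertices, `i_0(H) = 1` and `i_1(H) = m`, so the density is at
most `1 - (1 - t)^m - m t (1 - t)^{m-1}`, the probability of at least two successes in `m`
Bernoulli(`t`) trials, which is at most `((m - 1) t)^2` by induction on `m`.
-/

open Polynomial Finset Filter Topology

lemma Nat.eq_of_forall_div_pow_mod_eq {b l l' : ℕ} (hb : 1 < b)
    (h : ∀ i, l / b ^ i % b = l' / b ^ i % b) : l = l' := by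
  have hmod : ∀ k, l % b ^ k = l' % b ^ k := by
    intro k
    induction k with
    | zero => simp only [pow_zero, Nat.mod_one]
    | succ k ih => rw [Nat.mod_pow_succ, Nat.mod_pow_succ, ih, h]
  have hlt : ∀ n ≤ l + l', n < b ^ (l + l') := fun n hn =>
    hn.trans_lt (Nat.lt_pow_self hb)
  calc l = l % b ^ (l + l') := (Nat.mod_eq_of_lt (hlt l (by omega))).symm
    _ = l' % b ^ (l + l') := hmod _
    _ = l' := Nat.mod_eq_of_lt (hlt l' (by omega))

lemma Nat.mul_pow_add_div_pow_mod_of_lt {b u v e i : ℕ} (hb : 0 < b) (hi : i < e) :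
    (u * b ^ e + v) / b ^ i % b = v / b ^ i % b := by
  obtain ⟨d, rfl⟩ := Nat.exists_eq_add_of_lt hi
  rw [show u * b ^ (i + d + 1) + v = v + u * b ^ d * b * b ^ i by ring,
    Nat.add_mul_div_right _ _ (pow_pos hb i), Nat.add_mul_mod_self_right]

lemma Nat.mul_pow_add_div_pow_of_le {b u v e i : ℕ} (hv : v < b ^ e) (hi : e ≤ i) :
    (u * b ^ e + v) / b ^ i = u / b ^ (i - e) := by
  have hb : 0 < b ^ e := Nat.zero_lt_of_lt hv
  rw [show b ^ i = b ^ e * b ^ (i - e) by rw [← pow_add, Nat.add_sub_cancel' hi],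
    ← Nat.div_div_eq_div_mul, add_comm, Nat.add_mul_div_right _ _ hb, Nat.div_eq_of_lt hv,
    zero_add]

lemma tendsto_div_of_monotone_of_apply_mul {c : ℕ → ℕ} (hc : Monotone c) {Q : ℕ} (hQ : 0 < Q)
    (hcQ : ∀ u, c (u * Q) = u) :
    Tendsto (fun n => (c n : ℝ) / n) atTop (𝓝 (1 / Q)) := by
  have hlower (n : ℕ) : n ≤ (c n + 1) * Q := by
    have : n / Q ≤ c n := (hcQ _).symm.trans_le (hc (Nat.div_mul_le_self n Q))
    nlinarith [Nat.lt_div_mul_add (a := n) hQ]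
  have hupper (n : ℕ) : c n * Q ≤ n + Q := by
    have : c n ≤ n / Q + 1 :=
      (hc (Nat.lt_div_mul_add hQ).le).trans_eq (by rw [← add_one_mul, hcQ])
    nlinarith [Nat.div_mul_le_self n Q]
  have hε : Tendsto (fun n : ℕ => 1 / (n : ℝ)) atTop (𝓝 0) :=
    tendsto_one_div_atTop_nhds_zero_nat
  refine tendsto_of_tendsto_of_tendsto_of_le_of_le' (g := fun n : ℕ => 1 / (Q : ℝ) - 1 / n)
    (h := fun n : ℕ => 1 / (Q : ℝ) + 1 / n) (by simpa using hε.const_sub (1 / (Q : ℝ)))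
    (by simpa using hε.const_add (1 / (Q : ℝ))) ?_ ?_
  all_goals
    filter_upwards [eventually_gt_atTop 0] with n hn
    have hn' : (0 : ℝ) < n := Nat.cast_pos.mpr hn
  · have : (n : ℝ) ≤ (c n + 1) * Q := by exact_mod_cast hlower n
    rw [le_div_iff₀ hn']
    field_simp
    linarith
  · have : (c n : ℝ) * Q ≤ n + Q := by exact_mod_cast hupper n
    rw [div_le_iff₀ hn']
    field_simp
    linarith

section Enumeration

variable {Fq : Type*} [Field Fq] [Fintype Fq] {a : Fin (Fintype.card Fq) → Fq}

open scoped Classical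

lemma coeff_fenum (ha0 : a ⟨0, Fintype.card_pos⟩ = 0) (l i : ℕ) :
    (fenum a l).coeff i
      = a ⟨l / Fintype.card Fq ^ i % Fintype.card Fq, Nat.mod_lt _ Fintype.card_pos⟩ := by
  simp only [fenum, finsetSum_coeff, coeff_C_mul, coeff_X_pow, mul_ite, mul_one, mul_zero,
    sum_ite_eq, mem_range]
  split_ifs with hil
  · rfl
  · have hl : l < Fintype.card Fq ^ i :=
      (Nat.lt_pow_self Fintype.one_lt_card).trans_le' (by omega)
    exact ha0.symm.trans (congrArg a (Fin.ext (by simp [Nat.div_eq_of_lt hl])))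

lemma fenum_injective (ha : Function.Bijective a) (ha0 : a ⟨0, Fintype.card_pos⟩ = 0) :
    Function.Injective (fenum a) := fun l l' h =>
  Nat.eq_of_forall_div_pow_mod_eq Fintype.one_lt_card fun i =>
    congrArg Fin.val (ha.1 (by simpa only [coeff_fenum ha0] using congrArg (coeff · i) h))

lemma coeff_fenum_eq_zero (ha0 : a ⟨0, Fintype.card_pos⟩ = 0) {v e i : ℕ}
    (hv : v < Fintype.card Fq ^ e) (hi : e ≤ i) : (fenum a v).coeff i = 0 := by
  rw [coeff_fenum ha0, ← ha0]
  exact congrArg a (Fin.ext (by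
    simp [Nat.div_eq_of_lt (hv.trans_le (Nat.pow_le_pow_right Fintype.card_pos hi))]))

lemma fenum_mem_degreeLT (ha0 : a ⟨0, Fintype.card_pos⟩ = 0) {v e : ℕ}
    (hv : v < Fintype.card Fq ^ e) : fenum a v ∈ degreeLT Fq e :=
  mem_degreeLT.mpr <| (degree_lt_iff_coeff_zero _ _).mpr fun _ hi =>
    coeff_fenum_eq_zero ha0 hv hi

lemma fenum_mul_pow_add (ha0 : a ⟨0, Fintype.card_pos⟩ = 0) {u v e : ℕ}
    (hv : v < Fintype.card Fq ^ e) :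
    fenum a (u * Fintype.card Fq ^ e + v) = X ^ e * fenum a u + fenum a v := by
  ext i
  rw [coeff_add, X_pow_mul, coeff_mul_X_pow', coeff_fenum ha0]
  split_ifs with hei
  · rw [coeff_fenum_eq_zero ha0 hv hei, add_zero, coeff_fenum ha0]
    exact congrArg a (Fin.ext (by simp [Nat.mul_pow_add_div_pow_of_le hv hei]))
  · rw [zero_add, coeff_fenum ha0]
    exact congrArg a (Fin.ext
      (Nat.mul_pow_add_div_pow_mod_of_lt Fintype.card_pos (not_le.mp hei)))

lemma exists_lt_pow_fenum_eq (ha : Function.Bijective a) (ha0 : a ⟨0, Fintype.card_pos⟩ = 0)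
    {e : ℕ} {p : Fq[X]} (hp : p ∈ degreeLT Fq e) :
    ∃ v < Fintype.card Fq ^ e, fenum a v = p := by
  let φ : Fin (Fintype.card Fq ^ e) → degreeLT Fq e :=
    fun v => ⟨fenum a v, fenum_mem_degreeLT ha0 v.2⟩
  have : Finite (degreeLT Fq e) := .of_equiv _ (degreeLTEquiv Fq e).toEquiv.symm
  have hφ : Function.Bijective φ :=
    Function.Injective.bijective_of_nat_card_le
      (fun v w h => Fin.ext (fenum_injective ha ha0 (congrArg Subtype.val h)))
      (by simp [Nat.card_congr (degreeLTEquiv Fq e).toEquiv])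
  obtain ⟨v, hv⟩ := hφ.2 ⟨p, hp⟩
  exact ⟨v, v.2, congrArg Subtype.val hv⟩

lemma card_filter_dvd_add_fenum (ha : Function.Bijective a)
    (ha0 : a ⟨0, Fintype.card_pos⟩ = 0) {F : Fq[X]} (hF : F ≠ 0) (c : Fq[X]) :
    #{v ∈ range (Fintype.card Fq ^ F.natDegree) | F ∣ c + fenum a v} = 1 := by
  have hdeg : ∀ {p : Fq[X]}, p ∈ degreeLT Fq F.natDegree → p.degree < F.degree := fun hp =>
    (mem_degreeLT.mp hp).trans_eq (degree_eq_natDegree hF).symm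
  obtain ⟨v₀, hv₀, hv₀c⟩ := exists_lt_pow_fenum_eq ha ha0
    (mem_degreeLT.mpr ((degree_mod_lt (-c) hF).trans_eq (degree_eq_natDegree hF)))
  have hFv₀ : F ∣ c + fenum a v₀ := by
    rw [hv₀c, EuclideanDomain.mod_eq_sub_mul_div]
    exact ⟨-(-c / F), by ring⟩
  refine card_eq_one.mpr ⟨v₀, eq_singleton_iff_unique_mem.mpr
    ⟨mem_filter.mpr ⟨mem_range.mpr hv₀, hFv₀⟩, fun v hv => ?_⟩⟩
  obtain ⟨hv, hFv⟩ := mem_filter.mp hv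
  refine fenum_injective ha ha0 (sub_eq_zero.mp (eq_zero_of_dvd_of_degree_lt ?_ (hdeg ?_)))
  · simpa using dvd_sub hFv hFv₀
  · exact sub_mem (fenum_mem_degreeLT ha0 (mem_range.mp hv)) (fenum_mem_degreeLT ha0 hv₀)

lemma card_filter_dvd_fenum_range_mul (ha : Function.Bijective a)
    (ha0 : a ⟨0, Fintype.card_pos⟩ = 0) {F : Fq[X]} (hF : F ≠ 0) (u : ℕ) :
    #{l ∈ range (u * Fintype.card Fq ^ F.natDegree) | F ∣ fenum a l} = u := by
  induction u with
  | zero => simp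
  | succ u ih =>
    rw [add_one_mul, range_add, filter_union, card_union_of_disjoint
      (disjoint_filter_filter (disjoint_range_addLeftEmbedding _ _)), ih, filter_map, card_map]
    congr 1
    rw [← card_filter_dvd_add_fenum ha ha0 hF (X ^ F.natDegree * fenum a u)]
    refine congrArg card (filter_congr fun v hv => ?_)
    simp [fenum_mul_pow_add ha0 (mem_range.mp hv)]

variable (a) in
noncomputable def fenumUpTo (N : ℕ) : Finset Fq[X] :=
  (range (N + 1)).image (fenum a)

lemma card_fenumUpTo (ha : Function.Bijective a) (ha0 : a ⟨0, Fintype.card_pos⟩ = 0) (N : ℕ) :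
    #(fenumUpTo a N) = N + 1 := by
  rw [fenumUpTo, card_image_of_injective _ (fenum_injective ha ha0), card_range]

lemma mem_piFinset_fenumUpTo {m N : ℕ} {g : Fin m → Fq[X]} :
    g ∈ Fintype.piFinset (fun _ => fenumUpTo a N) ↔ ∀ i, ∃ l ≤ N, g i = fenum a l := by
  simp [fenumUpTo, eq_comm]

lemma tendsto_card_filter_dvd_fenumUpTo (ha : Function.Bijective a)
    (ha0 : a ⟨0, Fintype.card_pos⟩ = 0) {F : Fq[X]} (hF : F ≠ 0) :
    Tendsto (fun N => (#{p ∈ fenumUpTo a N | F ∣ p} : ℝ) / #(fenumUpTo a N)) atTop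
      (𝓝 (1 / (Fintype.card Fq : ℝ) ^ F.natDegree)) := by
  have hc : Monotone fun n => #{l ∈ range n | F ∣ fenum a l} := fun _ _ h =>
    card_le_card (filter_subset_filter _ (range_subset_range.mpr h))
  have h := (tendsto_add_atTop_iff_nat 1).mpr <| tendsto_div_of_monotone_of_apply_mul hc
    (pow_pos Fintype.card_pos _) (card_filter_dvd_fenum_range_mul ha ha0 hF)
  push_cast at h
  refine h.congr fun N => ?_
  rw [card_fenumUpTo ha ha0, fenumUpTo, filter_image,
    card_image_of_injective _ (fenum_injective ha ha0)]
  push_cast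
  rfl

lemma natCard_tuples_fenumUpTo {m N : ℕ} :
    Nat.card {g : Fin m → Fq[X] // ∀ i, ∃ l ≤ N, g i = fenum a l} = #(fenumUpTo a N) ^ m := by
  calc _ = Nat.card (Fintype.piFinset fun _ : Fin m => fenumUpTo a N) :=
        Nat.card_congr (Equiv.subtypeEquivRight fun _ => mem_piFinset_fenumUpTo.symm)
    _ = _ := by
      rw [Nat.card_eq_finsetCard, Fintype.card_piFinset, prod_const, card_univ, Fintype.card_fin]

lemma natCard_filter_tuples_fenumUpTo {m N : ℕ} (P : (Fin m → Fq[X]) → Prop) [DecidablePred P] :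
    Nat.card {g : Fin m → Fq[X] // P g ∧ ∀ i, ∃ l ≤ N, g i = fenum a l}
      = #{g ∈ Fintype.piFinset (fun _ => fenumUpTo a N) | P g} := by
  rw [← Nat.card_eq_finsetCard]
  exact Nat.card_congr (Equiv.subtypeEquivRight fun g => by
    rw [mem_filter, mem_piFinset_fenumUpTo, and_comm])

end Enumeration

section Patterns

variable {α ι : Type*} [Fintype ι] [DecidableEq ι] {S : Finset α} {P : α → Prop}
  [DecidablePred P]

lemma card_filter_piFinset_pattern_eq (s : Finset ι) :
    #{g ∈ Fintype.piFinset (fun _ : ι => S) | ({i | P (g i)} : Finset ι) = s}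
      = #{x ∈ S | P x} ^ #s * #{x ∈ S | ¬ P x} ^ (Fintype.card ι - #s) := by
  have hpattern : {g ∈ Fintype.piFinset (fun _ : ι => S) | ({i | P (g i)} : Finset ι) = s}
      = Fintype.piFinset fun i => if i ∈ s then {x ∈ S | P x} else {x ∈ S | ¬ P x} := by
    ext g
    simp only [mem_filter, Fintype.mem_piFinset, Finset.ext_iff, mem_univ, true_and]
    constructor
    · rintro ⟨hS, hs⟩ i
      split_ifs with hi <;> simp [hS i, (hs i).mpr, hi, (hs i).not.mpr]
    · intro h
      refine ⟨fun i => ?_, fun i => ?_⟩ <;> have := h i <;> split_ifs at this with hi <;>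
        simp_all
  rw [hpattern, Fintype.card_piFinset]
  simp only [apply_ite card, prod_ite, prod_const, filter_mem_eq_inter, univ_inter]
  rw [← compl_filter, card_compl, filter_mem_eq_inter, univ_inter]

lemma card_filter_piFinset_pattern (Q : Finset ι → Prop) [DecidablePred Q] :
    #{g ∈ Fintype.piFinset (fun _ : ι => S) | Q {i | P (g i)}}
      = ∑ s with Q s, #{x ∈ S | P x} ^ #s * #{x ∈ S | ¬ P x} ^ (Fintype.card ι - #s) := by
  rw [card_eq_sum_card_fiberwise (f := fun g => ({i | P (g i)} : Finset ι)) (t := {s | Q s})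
    fun g hg => by simpa using (mem_filter.mp hg).2]
  refine sum_congr rfl fun s hs => ?_
  rw [filter_filter, ← card_filter_piFinset_pattern_eq s]
  congr 1
  exact filter_congr fun g _ => ⟨And.right, fun h => ⟨h ▸ (mem_filter.mp hs).2, h⟩⟩

end Patterns

lemma indepCount_eq_card {m : ℕ} (H : Finset (Finset (Fin m))) (k : ℕ) :
    indepCount H k = #{s : Finset (Fin m) | (∀ e ∈ H, ¬ e ⊆ s) ∧ #s = k} := by
  rw [indepCount, Nat.card_eq_fintype_card, Fintype.card_subtype]

lemma sum_filter_indep_eq_sum_indepCount {M : Type*} [AddCommMonoid M] {m : ℕ}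
    (H : Finset (Finset (Fin m))) (φ : ℕ → M) :
    ∑ s : Finset (Fin m) with ∀ e ∈ H, ¬ e ⊆ s, φ #s
      = ∑ k ∈ range (m + 1), indepCount H k • φ k := by
  rw [← sum_fiberwise_of_maps_to (g := card) (t := range (m + 1))
    fun s _ => mem_range.mpr <| Nat.lt_succ_of_le <| (card_le_univ s).trans_eq (Fintype.card_fin m)]
  refine sum_congr rfl fun k _ => ?_
  rw [sum_congr rfl fun s hs => congrArg φ (mem_filter.mp hs).2, sum_const, indepCount_eq_card,
    filter_filter]

lemma card_filter_piFinset_exists_subset_div {α : Type*} {S : Finset α} (hS : S.Nonempty)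
    (P : α → Prop) [DecidablePred P] {m : ℕ} (H : Finset (Finset (Fin m))) :
    (#{g ∈ Fintype.piFinset (fun _ : Fin m => S) | ∃ e ∈ H, ∀ i ∈ e, P (g i)} : ℝ) / #S ^ m
      = 1 - ∑ k ∈ range (m + 1), (indepCount H k : ℝ) *
          (1 - #{x ∈ S | P x} / #S) ^ (m - k) * (#{x ∈ S | P x} / #S) ^ k := by
  have hn : (0 : ℝ) < #S := Nat.cast_pos.mpr hS.card_pos
  have hcompl : (#{x ∈ S | ¬ P x} : ℝ) / #S = 1 - #{x ∈ S | P x} / #S := by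
    rw [eq_sub_iff_add_eq, ← add_div, div_eq_one_iff_eq hn.ne', ← Nat.cast_add, add_comm,
      card_filter_add_card_filter_not]
  have htotal := card_filter_add_card_filter_not (s := Fintype.piFinset (fun _ : Fin m => S))
    (fun g => ∃ e ∈ H, ∀ i ∈ e, P (g i))
  have hindep : #{g ∈ Fintype.piFinset (fun _ : Fin m => S) | ¬ ∃ e ∈ H, ∀ i ∈ e, P (g i)}
      = ∑ k ∈ range (m + 1),
          indepCount H k • (#{x ∈ S | P x} ^ k * #{x ∈ S | ¬ P x} ^ (m - k)) := by
    calc _ = #{g ∈ Fintype.piFinset (fun _ : Fin m => S) |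
          ∀ e ∈ H, ¬ e ⊆ ({i | P (g i)} : Finset (Fin m))} := by
          congr 1
          exact filter_congr fun g _ => by simp [subset_iff]
      _ = ∑ s : Finset (Fin m) with ∀ e ∈ H, ¬ e ⊆ s,
          #{x ∈ S | P x} ^ #s * #{x ∈ S | ¬ P x} ^ (m - #s) := by
        simpa only [Fintype.card_fin] using
          card_filter_piFinset_pattern (S := S) (P := P) fun s => ∀ e ∈ H, ¬ e ⊆ s
      _ = _ := sum_filter_indep_eq_sum_indepCount H fun k =>
          #{x ∈ S | P x} ^ k * #{x ∈ S | ¬ P x} ^ (m - k)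
  rw [Fintype.card_piFinset, prod_const, card_univ, Fintype.card_fin, hindep] at htotal
  have hterm : ∀ k ∈ range (m + 1),
      (indepCount H k : ℝ) * (#{x ∈ S | ¬ P x} / #S) ^ (m - k) * (#{x ∈ S | P x} / #S) ^ k
        = ((indepCount H k • (#{x ∈ S | P x} ^ k * #{x ∈ S | ¬ P x} ^ (m - k)) : ℕ) : ℝ)
          / #S ^ m := by
    intro k hk
    have hpow : (#S : ℝ) ^ m = #S ^ k * #S ^ (m - k) := by
      rw [← pow_add, Nat.add_sub_cancel' (Nat.lt_succ_iff.mp (mem_range.mp hk))]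
    rw [hpow, nsmul_eq_mul, div_pow, div_pow]
    push_cast
    field_simp
  rw [← hcompl, sum_congr rfl hterm, ← sum_div, eq_sub_iff_add_eq, ← add_div,
    div_eq_one_iff_eq (pow_ne_zero m hn.ne')]
  exact_mod_cast htotal

section Bound

variable {m : ℕ} {H : Finset (Finset (Fin m))}

lemma indepCount_zero (hH : ∅ ∉ H) : indepCount H 0 = 1 := by
  rw [indepCount_eq_card, card_eq_one]
  refine ⟨∅, eq_singleton_iff_unique_mem.mpr ⟨?_, fun s hs => ?_⟩⟩
  · exact mem_filter.mpr ⟨mem_univ _, fun e he hsub => hH (subset_empty.mp hsub ▸ he), card_empty⟩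
  · exact card_eq_zero.mp (mem_filter.mp hs).2.2

lemma indepCount_one (hH : ∀ e ∈ H, 1 < #e) : indepCount H 1 = m := by
  rw [indepCount_eq_card, filter_congr (q := fun s => #s = 1) fun s _ =>
    and_iff_right_of_imp fun hs e he hsub => (card_le_card hsub).not_gt (hs ▸ hH e he),
    ← powerset_univ, ← powersetCard_eq_filter, card_powersetCard, card_univ, Fintype.card_fin,
    Nat.choose_one_right]

lemma one_sub_pow_sub_mul_le {t : ℝ} (ht0 : 0 ≤ t) (ht1 : t ≤ 1) (m : ℕ) :
    1 - (1 - t) ^ m - m * t * (1 - t) ^ (m - 1) ≤ ((m - 1) * t) ^ 2 := by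
  rcases m with _ | n
  · simpa using sq_nonneg t
  induction n with
  | zero => simp
  | succ n ih =>
    have hpow : (1 - t) ^ n ≤ 1 := pow_le_one₀ (by linarith) (by linarith)
    push_cast at ih ⊢
    -- one more trial: at least two successes now also arise from exactly one success among
    -- the first `n + 1` trials followed by a success
    have hstep : 1 - (1 - t) ^ (n + 1 + 1) - (n + 1 + 1) * t * (1 - t) ^ (n + 1)
        = 1 - (1 - t) ^ (n + 1) - (n + 1) * t * (1 - t) ^ n
          + (n + 1) * t ^ 2 * (1 - t) ^ n := by
      ring
    rw [hstep]
    nlinarith [mul_le_mul_of_nonneg_left hpow (by positivity : (0 : ℝ) ≤ (n + 1) * t ^ 2)]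

lemma pow_add_mul_le_sum_indepCount (hH : ∀ e ∈ H, 1 < #e) {t : ℝ} (ht0 : 0 ≤ t)
    (ht1 : t ≤ 1) :
    (1 - t) ^ m + m * t * (1 - t) ^ (m - 1)
      ≤ ∑ k ∈ range (m + 1), (indepCount H k : ℝ) * (1 - t) ^ (m - k) * t ^ k := by
  have h0 : indepCount H 0 = 1 := indepCount_zero fun he => by simpa using hH ∅ he
  rcases m with _ | n
  · simp [h0]
  rw [sum_range_succ', sum_range_succ', h0, indepCount_one hH]
  have hrest : 0 ≤ ∑ k ∈ range n, (indepCount H (k + 1 + 1) : ℝ) *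
      (1 - t) ^ (n + 1 - (k + 1 + 1)) * t ^ (k + 1 + 1) := by
    have h1t : 0 ≤ 1 - t := by linarith
    exact sum_nonneg fun k _ => by positivity
  simp only [Nat.add_sub_cancel, Nat.sub_zero, pow_zero, zero_add, pow_one, mul_one, Nat.cast_one,
    one_mul]
  linarith

lemma one_sub_sum_indepCount_le (hH : ∀ e ∈ H, 1 < #e) {t : ℝ} (ht0 : 0 ≤ t) (ht1 : t ≤ 1) :
    1 - ∑ k ∈ range (m + 1), (indepCount H k : ℝ) * (1 - t) ^ (m - k) * t ^ k
      ≤ ((m - 1) * t) ^ 2 := by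
  linarith [pow_add_mul_le_sum_indepCount hH ht0 ht1, one_sub_pow_sub_mul_le ht0 ht1 m]

end Bound

theorem density_K_f_general {Fq : Type*} [Field Fq] [Fintype Fq]
    (a : Fin (Fintype.card Fq) → Fq) (ha : Function.Bijective a)
    (ha0 : a ⟨0, Fintype.card_pos⟩ = 0)
    (r j m : ℕ) (hj : 2 ≤ j)
    (H : Finset (Finset (Fin m))) (hH : ∀ e ∈ H, e.card = j)
    (f : Polynomial Fq) (hf : f.Monic)
    (Kf : Set (Fin m → Polynomial Fq))
    (hKf : ∀ g, g ∈ Kf ↔ ∃ e ∈ H, ∀ i ∈ e, f ^ r ∣ g i) :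
    Filter.Tendsto (fun N : ℕ =>
      (Nat.card {g : Fin m → Polynomial Fq // g ∈ Kf ∧ ∀ i, ∃ l ≤ N, g i = fenum a l} : ℝ)
        / (Nat.card {g : Fin m → Polynomial Fq // ∀ i, ∃ l ≤ N, g i = fenum a l} : ℝ))
      Filter.atTop
      (nhds (1 - ∑ k ∈ Finset.range (m + 1), (indepCount H k : ℝ) *
        (1 - 1 / (Fintype.card Fq : ℝ) ^ (r * f.natDegree)) ^ (m - k) *
        (1 / (Fintype.card Fq : ℝ) ^ (r * f.natDegree)) ^ k)) ∧
    1 - ∑ k ∈ Finset.range (m + 1), (indepCount H k : ℝ) *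
        (1 - 1 / (Fintype.card Fq : ℝ) ^ (r * f.natDegree)) ^ (m - k) *
        (1 / (Fintype.card Fq : ℝ) ^ (r * f.natDegree)) ^ k ≤
      (((m : ℝ) - 1) / (Fintype.card Fq : ℝ) ^ (r * f.natDegree)) ^ 2 := by
  classical
  set t : ℝ := 1 / (Fintype.card Fq : ℝ) ^ (r * f.natDegree)
  have hratio (N : ℕ) :
      (Nat.card {g : Fin m → Fq[X] // g ∈ Kf ∧ ∀ i, ∃ l ≤ N, g i = fenum a l} : ℝ)
        / Nat.card {g : Fin m → Fq[X] // ∀ i, ∃ l ≤ N, g i = fenum a l}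
      = 1 - ∑ k ∈ range (m + 1), (indepCount H k : ℝ) *
          (1 - #{p ∈ fenumUpTo a N | f ^ r ∣ p} / #(fenumUpTo a N)) ^ (m - k) *
          (#{p ∈ fenumUpTo a N | f ^ r ∣ p} / #(fenumUpTo a N)) ^ k := by
    simp only [hKf]
    rw [natCard_filter_tuples_fenumUpTo, natCard_tuples_fenumUpTo, Nat.cast_pow]
    exact card_filter_piFinset_exists_subset_div (nonempty_range_add_one.image _) _ H
  have hdensity := tendsto_card_filter_dvd_fenumUpTo ha ha0 (pow_ne_zero r hf.ne_zero)
  rw [natDegree_pow] at hdensity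
  have hcont : Continuous fun p : ℝ =>
      1 - ∑ k ∈ range (m + 1), (indepCount H k : ℝ) * (1 - p) ^ (m - k) * p ^ k := by
    fun_prop
  refine ⟨((hcont.tendsto t).comp hdensity).congr fun N => (hratio N).symm, ?_⟩
  have ht0 : 0 ≤ t := by positivity
  have ht1 : t ≤ 1 := div_le_one_of_le₀ (one_le_pow₀ (mod_cast Fintype.card_pos)) (by positivity)
  calc _ ≤ ((m - 1) * t) ^ 2 :=
        one_sub_sum_indepCount_le (fun e he => (hH e he).symm ▸ hj) ht0 ht1
    _ = _ := by rw [mul_one_div]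

/-- The set `K_f` of `m`-tuples failing `H`-wise relative `r`-primality at the monic
irreducible `f` has density `1 - ∑_{k=0}^m i_k(H) (1 - 1/q^{r deg f})^{m-k} (1/q^{r deg f})^k`,
which is at most `((m-1)/q^{r deg f})^2`. -/
theorem density_K_f {Fq : Type*} [Field Fq] [Fintype Fq]
    (a : Fin (Fintype.card Fq) → Fq) (ha : Function.Bijective a)
    (ha0 : a ⟨0, Fintype.card_pos⟩ = 0)
    (r j m : ℕ) (hr : 1 ≤ r) (hj : 2 ≤ j) (hjm : j ≤ m)
    (H : Finset (Finset (Fin m))) (hH : ∀ e ∈ H, e.card = j)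
    (f : Polynomial Fq) (hf : f.Monic) (hfi : Irreducible f)
    (Kf : Set (Fin m → Polynomial Fq))
    (hKf : ∀ g, g ∈ Kf ↔ ∃ e ∈ H, ∀ i ∈ e, f ^ r ∣ g i) :
    Filter.Tendsto (fun N : ℕ =>
      (Nat.card {g : Fin m → Polynomial Fq // g ∈ Kf ∧ ∀ i, ∃ l ≤ N, g i = fenum a l} : ℝ)
        / (Nat.card {g : Fin m → Polynomial Fq // ∀ i, ∃ l ≤ N, g i = fenum a l} : ℝ))
      Filter.atTop
      (nhds (1 - ∑ k ∈ Finset.range (m + 1), (indepCount H k : ℝ) *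
        (1 - 1 / (Fintype.card Fq : ℝ) ^ (r * f.natDegree)) ^ (m - k) *
        (1 / (Fintype.card Fq : ℝ) ^ (r * f.natDegree)) ^ k)) ∧
    1 - ∑ k ∈ Finset.range (m + 1), (indepCount H k : ℝ) *
        (1 - 1 / (Fintype.card Fq : ℝ) ^ (r * f.natDegree)) ^ (m - k) *
        (1 / (Fintype.card Fq : ℝ) ^ (r * f.natDegree)) ^ k ≤
      (((m : ℝ) - 1) / (Fintype.card Fq : ℝ) ^ (r * f.natDegree)) ^ 2 :=
  density_K_f_general a ha ha0 r j m hj H hH f hf Kf hKf
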